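/- Let M be an infinite complete pointed metric space. Then SNA(M) contains a linear subspace of Lip_0(M) isomorphic to c_0; that is, there is a bounded linear operator T : c_0 → Lip_0(M) which is an isomorphism onto its range such that every function in T(c_0) strongly attains its Lipschitz norm. -/

import Mathlib

open Metric Set Filter Topology ZeroAtInfty

/-- The Lipschitz norm (best Lipschitz constant, as a supremum of difference quotients). -/
noncomputable def lipNorm {M : Type*} [MetricSpace M] (f : M → ℝ) : ℝ :=
  sSup {r : ℝ | ∃ x y : M, x ≠ y ∧ r = |f x - f y| / dist x y}

/-- `f` strongly attains its Lipschitz norm. -/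
def StronglyAttains {M : Type*} [MetricSpace M] (f : M → ℝ) : Prop :=
  ∃ x y : M, x ≠ y ∧ (f x - f y) / dist x y = lipNorm f

/-- `f` is Lipschitz with (real) constant `K`. -/
def IsLipWith {M : Type*} [MetricSpace M] (K : ℝ) (f : M → ℝ) : Prop :=
  ∀ x y : M, |f x - f y| ≤ K * dist x y

/-- Distance between two subsets of a metric space. -/
noncomputable def setDist {M : Type*} [MetricSpace M] (A B : Set M) : ℝ :=
  sInf {r : ℝ | ∃ a ∈ A, ∃ b ∈ B, r = dist a b}

/-- A subset is uniformly discrete. -/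
def UnifDiscreteOn {M : Type*} [MetricSpace M] (s : Set M) : Prop :=
  ∃ r > 0, ∀ x ∈ s, ∀ y ∈ s, x ≠ y → r ≤ dist x y

/-- `R(x)`: the supremum of radii `R ≥ 0` with `closedBall x R = {x}`. -/
noncomputable def isolRad {M : Type*} [MetricSpace M] (x : M) : ℝ :=
  sSup {R : ℝ | 0 ≤ R ∧ Metric.closedBall x R = {x}}

/-!
Take 1-Lipschitz functions `f n` with pairwise disjoint supports such that `f n` has slope exactly
`1` on a pair `(P n, Q n)` where all other `f m` vanish, and let `T v = ∑ v n • f n`, shifted to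
vanish at the base point. The pair `(P N, Q N)` with `|v N| = ‖v‖` gives
`‖v‖ ≤ lipNorm (T v) ≤ 2 ‖v‖`. If the supports are separated (`|f m x| + |f n y| ≤ dist x y`)
then `lipNorm (T v) = ‖v‖` is attained at `(P N, Q N)`. If the supports are finite, difference
quotients above `‖v‖ + η` only come from the finitely many points where some `f n` with `|v n| > η`
is nonzero, so the supremum is a maximum.

Such a sequence exists in every infinite complete metric space. Near an accumulation point `p` one
uses tents `max 0 (r - dist · c)` if arbitrarily close to `p` there are points with a neighbour much
closer than `p`, and two-point spikes otherwise. If all points are isolated, one uses tents when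
the distances to nearest neighbours are not bounded below (completeness yields a separated
subsequence), and spikes when the space is uniformly discrete.
-/

section LipNorm

variable {M : Type*} [MetricSpace M] {g : M → ℝ} {L : ℝ}

lemma bddAbove_lipQuotients (hg : IsLipWith L g) :
    BddAbove {r : ℝ | ∃ x y : M, x ≠ y ∧ r = |g x - g y| / dist x y} := by
  refine ⟨L, ?_⟩
  rintro _ ⟨x, y, hxy, rfl⟩
  exact (div_le_iff₀ (dist_pos.2 hxy)).2 (hg x y)

lemma div_le_lipNorm (hg : IsLipWith L g) {x y : M} (hxy : x ≠ y) :
    |g x - g y| / dist x y ≤ lipNorm g :=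
  le_csSup (bddAbove_lipQuotients hg) ⟨x, y, hxy, rfl⟩

lemma lipNorm_le [Nontrivial M] (hg : IsLipWith L g) : lipNorm g ≤ L := by
  obtain ⟨x, y, hxy⟩ := exists_pair_ne M
  refine csSup_le ⟨_, x, y, hxy, rfl⟩ ?_
  rintro _ ⟨x, y, hxy, rfl⟩
  exact (div_le_iff₀ (dist_pos.2 hxy)).2 (hg x y)

lemma stronglyAttains_of_abs_div_eq {x y : M} (hxy : x ≠ y)
    (h : |g x - g y| / dist x y = lipNorm g) : StronglyAttains g := by
  rcases le_or_gt 0 (g x - g y) with hpos | hneg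
  · exact ⟨x, y, hxy, by rwa [abs_of_nonneg hpos] at h⟩
  · refine ⟨y, x, hxy.symm, ?_⟩
    rwa [abs_of_neg hneg, neg_sub, dist_comm] at h

/-- Above any level `a < lipNorm g` only the finitely many quotients of pairs inside `S` remain,
so the supremum is a maximum. -/
lemma stronglyAttains_of_finite [Nontrivial M] {S : Set M} (hS : S.Finite)
    {a : ℝ} (ha : a < lipNorm g) (hout : ∀ x y, x ∉ S → |g x - g y| ≤ a * dist x y) :
    StronglyAttains g := by
  set Q := {r : ℝ | ∃ x y : M, x ≠ y ∧ r = |g x - g y| / dist x y}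
  have hQa_fin : (Q ∩ Ioi a).Finite := by
    refine ((hS.prod hS).image fun p : M × M => |g p.1 - g p.2| / dist p.1 p.2).subset ?_
    rintro _ ⟨⟨x, y, hxy, rfl⟩, hr⟩
    have hbig : ∀ x y, x ≠ y → x ∉ S → ¬ a < |g x - g y| / dist x y := fun x y hxy hx =>
      not_lt.2 ((div_le_iff₀ (dist_pos.2 hxy)).2 (hout x y hx))
    refine ⟨(x, y), ⟨?_, ?_⟩, rfl⟩
    · exact by_contra fun hx => hbig x y hxy hx hr
    · refine by_contra fun hy => hbig y x hxy.symm hy ?_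
      rwa [abs_sub_comm, dist_comm]
  obtain ⟨x, y, hxy⟩ := exists_pair_ne M
  obtain ⟨r₀, hr₀Q, hr₀⟩ := exists_lt_of_lt_csSup (s := Q) ⟨_, x, y, hxy, rfl⟩ ha
  obtain ⟨m, ⟨hmQ, hma⟩, hmax⟩ := exists_max_image _ id hQa_fin ⟨r₀, hr₀Q, hr₀⟩
  have hm : IsGreatest Q m := ⟨hmQ, fun r hr => by
    rcases le_or_gt r a with hra | hra
    · exact hra.trans hma.le
    · exact hmax r ⟨hr, hra⟩⟩
  obtain ⟨x, y, hxy, rfl⟩ := hmQ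
  exact stronglyAttains_of_abs_div_eq hxy hm.csSup_eq.symm

end LipNorm

section CZero

lemma abs_apply_le_norm (v : C₀(ℕ, ℝ)) (n : ℕ) : |v n| ≤ ‖v‖ := by
  simpa [← ZeroAtInftyContinuousMap.norm_toBCF_eq_norm] using v.toBCF.norm_coe_le_norm n

lemma exists_abs_apply_eq_norm (v : C₀(ℕ, ℝ)) : ∃ N, |v N| = ‖v‖ := by
  obtain ⟨N, hN⟩ : ∃ N, ∀ n, |v n| ≤ |v N| := by
    by_cases hv : ∀ n, v n = 0
    · exact ⟨0, by simp [hv]⟩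
    push Not at hv
    obtain ⟨n₀, hn₀⟩ := hv
    refine (continuous_of_discreteTopology (f := fun n => |v n|)).exists_forall_ge' n₀ ?_
    have hlim : Tendsto (fun n => |v n|) (cocompact ℕ) (𝓝 0) := by
      simpa using v.zero_at_infty'.abs
    exact hlim.eventually (ge_mem_nhds (abs_pos.2 hn₀))
  refine ⟨N, le_antisymm (abs_apply_le_norm v N) ?_⟩
  rw [← ZeroAtInftyContinuousMap.norm_toBCF_eq_norm]
  exact (BoundedContinuousFunction.norm_le (abs_nonneg _)).2 fun n => hN n

lemma exists_forall_abs_apply_le (v : C₀(ℕ, ℝ)) {η : ℝ} (hη : 0 < η) :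
    ∃ K, ∀ n, K ≤ n → |v n| ≤ η := by
  have hlim : Tendsto (fun n => |v n|) atTop (𝓝 0) := by
    simpa [cocompact_eq_atTop] using v.zero_at_infty'.abs
  exact eventually_atTop.1 (hlim.eventually (ge_mem_nhds hη))

end CZero

structure PeakingSeq (M : Type*) [MetricSpace M] where
  f : ℕ → M → ℝ
  P : ℕ → M
  Q : ℕ → M
  lipschitzWith : ∀ n, LipschitzWith 1 (f n)
  disjoint_support : Pairwise fun m n => Disjoint (Function.support (f m)) (Function.support (f n))
  P_ne_Q : ∀ n, P n ≠ Q n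
  sub_eq_dist : ∀ n, f n (P n) - f n (Q n) = dist (P n) (Q n)
  apply_P : ∀ m n, m ≠ n → f m (P n) = 0
  apply_Q : ∀ m n, m ≠ n → f m (Q n) = 0

namespace PeakingSeq

variable {M : Type*} [MetricSpace M] (G : PeakingSeq M)

def SeparatedSupports : Prop :=
  ∀ m n, m ≠ n → ∀ x y, G.f m x ≠ 0 → G.f n y ≠ 0 → |G.f m x| + |G.f n y| ≤ dist x y

def FiniteSupports : Prop := ∀ n, (Function.support (G.f n)).Finite

lemma nontrivial (G : PeakingSeq M) : Nontrivial M := ⟨⟨_, _, G.P_ne_Q 0⟩⟩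

lemma abs_sub_le (n : ℕ) (x y : M) : |G.f n x - G.f n y| ≤ dist x y := by
  simpa [Real.dist_eq] using (G.lipschitzWith n).dist_le_mul x y

open Classical in
/-- The unique `n` with `f n x ≠ 0`, or `0` if there is none. -/
noncomputable def index (x : M) : ℕ := if h : ∃ n, G.f n x ≠ 0 then h.choose else 0

lemma apply_eq_zero_of_ne_index {m : ℕ} {x : M} (hm : m ≠ G.index x) : G.f m x = 0 := by
  by_contra hx
  have h : ∃ n, G.f n x ≠ 0 := ⟨m, hx⟩
  rw [index, dif_pos h] at hm
  exact Set.disjoint_left.1 (G.disjoint_support hm) hx h.choose_spec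

lemma apply_eq_zero_of_apply_index_eq_zero {x : M} (h : G.f (G.index x) x = 0) (n : ℕ) :
    G.f n x = 0 := by
  by_cases hn : n = G.index x
  · rwa [hn]
  · exact G.apply_eq_zero_of_ne_index hn

/-- `G.sum v = ∑ n, v n • G.f n`; at each point at most one term is nonzero. -/
noncomputable def sum (v : C₀(ℕ, ℝ)) (x : M) : ℝ := v (G.index x) * G.f (G.index x) x

lemma sum_eq {v : C₀(ℕ, ℝ)} {x : M} {n : ℕ} (h : ∀ m, m ≠ n → G.f m x = 0) :
    G.sum v x = v n * G.f n x := by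
  by_cases hn : n = G.index x
  · rw [sum, ← hn]
  · rw [sum, h _ (Ne.symm hn), G.apply_eq_zero_of_ne_index hn, mul_zero, mul_zero]

lemma sum_P_sub_sum_Q (v : C₀(ℕ, ℝ)) (n : ℕ) :
    G.sum v (G.P n) - G.sum v (G.Q n) = v n * dist (G.P n) (G.Q n) := by
  rw [G.sum_eq fun m hm => G.apply_P m n hm, G.sum_eq fun m hm => G.apply_Q m n hm, ← mul_sub,
    G.sub_eq_dist]

lemma abs_mul_apply_le {v : C₀(ℕ, ℝ)} {n : ℕ} {x y : M} {α : ℝ} (hα : 0 ≤ α)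
    (hx : G.f n x ≠ 0 → |v n| ≤ α) (hy : G.f n y = 0) : |v n * G.f n x| ≤ α * dist x y := by
  by_cases hfx : G.f n x = 0
  · simpa [hfx] using mul_nonneg hα dist_nonneg
  rw [abs_mul]
  exact mul_le_mul (hx hfx) (by simpa [hy] using G.abs_sub_le n x y) (abs_nonneg _) hα

lemma abs_sum_sub_sum_le {v : C₀(ℕ, ℝ)} {x y : M} {α β : ℝ} (hα : 0 ≤ α) (hβ : 0 ≤ β)
    (hx : ∀ n, G.f n x ≠ 0 → |v n| ≤ α) (hy : ∀ n, G.f n y ≠ 0 → |v n| ≤ β) :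
    |G.sum v x - G.sum v y| ≤ (α + β) * dist x y := by
  have hd := dist_nonneg (x := x) (y := y)
  by_cases hnm : G.index x = G.index y
  · rw [sum, sum, ← hnm, ← mul_sub, abs_mul]
    generalize G.index x = n
    by_cases hfx : G.f n x = 0
    · by_cases hfy : G.f n y = 0
      · simpa [hfx, hfy] using mul_nonneg (add_nonneg hα hβ) hd
      · rw [dist_comm, abs_sub_comm]
        exact mul_le_mul (by linarith [hy n hfy]) (G.abs_sub_le n y x) (abs_nonneg _) (by linarith)
    · exact mul_le_mul (by linarith [hx n hfx]) (G.abs_sub_le n x y) (abs_nonneg _) (by linarith)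
  · have hnx := G.abs_mul_apply_le hα (hx _) (G.apply_eq_zero_of_ne_index hnm)
    have hmy := G.abs_mul_apply_le hβ (hy _) (G.apply_eq_zero_of_ne_index (Ne.symm hnm))
    rw [dist_comm] at hmy
    calc |G.sum v x - G.sum v y| ≤ |G.sum v x| + |G.sum v y| := abs_sub _ _
      _ ≤ (α + β) * dist x y := by rw [sum, sum]; linarith

lemma abs_sum_sub_sum_le_of_separated (hG : G.SeparatedSupports) (v : C₀(ℕ, ℝ)) (x y : M) :
    |G.sum v x - G.sum v y| ≤ ‖v‖ * dist x y := by
  have hv := abs_apply_le_norm v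
  by_cases hnm : G.index x = G.index y
  · rw [sum, sum, ← hnm, ← mul_sub, abs_mul]
    exact mul_le_mul (hv _) (G.abs_sub_le _ x y) (abs_nonneg _) (norm_nonneg v)
  by_cases hfx : G.f (G.index x) x = 0
  · simpa using G.abs_sum_sub_sum_le le_rfl (norm_nonneg v)
      (fun n hn => absurd (G.apply_eq_zero_of_apply_index_eq_zero hfx n) hn) (fun n _ => hv n)
  by_cases hfy : G.f (G.index y) y = 0
  · simpa using G.abs_sum_sub_sum_le (norm_nonneg v) le_rfl (fun n _ => hv n)
      (fun n hn => absurd (G.apply_eq_zero_of_apply_index_eq_zero hfy n) hn)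
  have hsep := hG _ _ hnm x y hfx hfy
  calc |G.sum v x - G.sum v y| ≤ |G.sum v x| + |G.sum v y| := abs_sub _ _
    _ ≤ ‖v‖ * |G.f (G.index x) x| + ‖v‖ * |G.f (G.index y) y| := by
      rw [sum, sum, abs_mul, abs_mul]
      gcongr <;> exact hv _
    _ ≤ ‖v‖ * dist x y := by rw [← mul_add]; gcongr

noncomputable def toLinearMap (z : M) : C₀(ℕ, ℝ) →ₗ[ℝ] M → ℝ where
  toFun v x := G.sum v x - G.sum v z
  map_add' u v := by
    ext x
    simp only [sum, ZeroAtInftyContinuousMap.coe_add, Pi.add_apply]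
    ring
  map_smul' c v := by
    ext x
    simp only [sum, ZeroAtInftyContinuousMap.coe_smul, Pi.smul_apply, smul_eq_mul,
      RingHom.id_apply]
    ring

variable (z : M) (v : C₀(ℕ, ℝ))

lemma toLinearMap_apply_self : G.toLinearMap z v z = 0 := sub_self _

lemma toLinearMap_apply_sub (x y : M) :
    G.toLinearMap z v x - G.toLinearMap z v y = G.sum v x - G.sum v y :=
  sub_sub_sub_cancel_right _ _ _

lemma isLipWith_toLinearMap : IsLipWith (2 * ‖v‖) (G.toLinearMap z v) := fun x y => by
  rw [toLinearMap_apply_sub, two_mul]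
  exact G.abs_sum_sub_sum_le (norm_nonneg v) (norm_nonneg v) (fun n _ => abs_apply_le_norm v n)
    (fun n _ => abs_apply_le_norm v n)

lemma abs_div_toLinearMap_P_Q (n : ℕ) :
    |G.toLinearMap z v (G.P n) - G.toLinearMap z v (G.Q n)| / dist (G.P n) (G.Q n) = |v n| := by
  rw [toLinearMap_apply_sub, sum_P_sub_sum_Q, abs_mul, abs_dist,
    mul_div_cancel_right₀ _ (dist_pos.2 (G.P_ne_Q n)).ne']

lemma norm_le_lipNorm_toLinearMap : ‖v‖ ≤ lipNorm (G.toLinearMap z v) := by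
  obtain ⟨N, hN⟩ := exists_abs_apply_eq_norm v
  rw [← hN, ← G.abs_div_toLinearMap_P_Q]
  exact div_le_lipNorm (G.isLipWith_toLinearMap z v) (G.P_ne_Q N)

lemma stronglyAttains_of_lipNorm_le (h : lipNorm (G.toLinearMap z v) ≤ ‖v‖) :
    StronglyAttains (G.toLinearMap z v) := by
  obtain ⟨N, hN⟩ := exists_abs_apply_eq_norm v
  refine stronglyAttains_of_abs_div_eq (G.P_ne_Q N) ?_
  rw [G.abs_div_toLinearMap_P_Q, hN]
  exact le_antisymm (G.norm_le_lipNorm_toLinearMap z v) h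

lemma stronglyAttains_of_finiteSupports (hG : G.FiniteSupports) :
    StronglyAttains (G.toLinearMap z v) := by
  have := G.nontrivial
  by_cases hL : lipNorm (G.toLinearMap z v) ≤ ‖v‖
  · exact G.stronglyAttains_of_lipNorm_le z v hL
  push Not at hL
  obtain ⟨a, hva, haL⟩ := exists_between hL
  obtain ⟨K, hK⟩ := exists_forall_abs_apply_le v (sub_pos.2 hva)
  refine stronglyAttains_of_finite ((finite_lt_nat K).biUnion fun n _ => hG n) haL
    fun x y hx => ?_
  have hxK : ∀ n, G.f n x ≠ 0 → |v n| ≤ a - ‖v‖ := fun n hn =>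
    hK n (not_lt.1 fun h => hx (mem_biUnion h hn))
  have := G.abs_sum_sub_sum_le (y := y) (sub_pos.2 hva).le (norm_nonneg v) hxK
    fun n _ => abs_apply_le_norm v n
  rwa [toLinearMap_apply_sub, ← sub_add_cancel a ‖v‖]

lemma stronglyAttains_toLinearMap (hG : G.SeparatedSupports ∨ G.FiniteSupports) :
    StronglyAttains (G.toLinearMap z v) := by
  have := G.nontrivial
  rcases hG with hsep | hfin
  · refine G.stronglyAttains_of_lipNorm_le z v (lipNorm_le fun x y => ?_)
    rw [toLinearMap_apply_sub]
    exact G.abs_sum_sub_sum_le_of_separated hsep v x y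
  · exact G.stronglyAttains_of_finiteSupports z v hfin

end PeakingSeq

section InfDistCompl

variable {M : Type*} [MetricSpace M]

lemma infDist_compl_le_dist {x y : M} (h : y ≠ x) : infDist x {x}ᶜ ≤ dist x y :=
  infDist_le_dist_of_mem h

lemma exists_ne_dist_lt [Nontrivial M] {x : M} {r : ℝ} (h : infDist x {x}ᶜ < r) :
    ∃ y, y ≠ x ∧ dist x y < r := by
  simpa using (infDist_lt_iff (nonempty_compl_of_nontrivial x)).1 h

end InfDistCompl

section Tents

variable {M : Type*} [MetricSpace M]

def tent (c : M) (r : ℝ) (u : M) : ℝ := max 0 (r - dist u c)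

lemma lipschitzWith_tent (c : M) (r : ℝ) : LipschitzWith 1 (tent c r) :=
  LipschitzWith.of_le_add fun x y => by
    unfold tent
    exact max_le (add_nonneg (le_max_left _ _) dist_nonneg)
      (by linarith [le_max_right 0 (r - dist y c), dist_triangle y x c, dist_comm x y])

lemma tent_eq_zero {c u : M} {r : ℝ} (h : r ≤ dist u c) : tent c r u = 0 :=
  max_eq_left (by linarith)

lemma tent_eq {c u : M} {r : ℝ} (h : dist u c ≤ r) : tent c r u = r - dist u c :=
  max_eq_right (by linarith)

lemma abs_tent_of_ne_zero {c u : M} {r : ℝ} (h : tent c r u ≠ 0) :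
    |tent c r u| = r - dist u c :=
  (abs_of_nonneg (le_max_left _ _)).trans (tent_eq (not_lt.1 fun hlt => h (tent_eq_zero hlt.le)))

theorem exists_peakingSeq_of_tents [Nontrivial M] (c : ℕ → M) (r : ℕ → ℝ)
    (hr : ∀ n, infDist (c n) {c n}ᶜ < r n)
    (hsep : ∀ m n, m < n → r m + r n ≤ dist (c m) (c n)) :
    ∃ G : PeakingSeq M, G.SeparatedSupports := by
  choose Y hYc hY using fun n => exists_ne_dist_lt (hr n)
  have hsep' : Pairwise fun m n => r m + r n ≤ dist (c m) (c n) := fun m n hmn => by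
    rcases hmn.lt_or_gt with h | h
    · exact hsep m n h
    · rw [add_comm, dist_comm]; exact hsep n m h
  have hf_sep : ∀ m n, m ≠ n → ∀ x y, tent (c m) (r m) x ≠ 0 → tent (c n) (r n) y ≠ 0 →
      |tent (c m) (r m) x| + |tent (c n) (r n) y| ≤ dist x y := fun m n hmn x y hx hy => by
    rw [abs_tent_of_ne_zero hx, abs_tent_of_ne_zero hy]
    linarith [hsep' hmn, dist_triangle (c m) x (c n), dist_triangle x y (c n), dist_comm x (c m)]
  refine ⟨{
    f := fun n => tent (c n) (r n)
    P := c
    Q := Y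
    lipschitzWith := fun n => lipschitzWith_tent (c n) (r n)
    disjoint_support := fun m n hmn => Set.disjoint_left.2 fun x hm hn => by
      have := hf_sep m n hmn x x hm hn
      rw [dist_self] at this
      exact hm (abs_nonpos_iff.1 (by linarith [abs_nonneg (tent (c n) (r n) x)]))
    P_ne_Q := fun n => (hYc n).symm
    sub_eq_dist := fun n => by
      rw [tent_eq ((dist_self _).trans_le (dist_nonneg.trans (hY n).le)),
        tent_eq (by rw [dist_comm]; exact (hY n).le),
        dist_self, dist_comm]
      ring
    apply_P := fun m n hmn => tent_eq_zero (by
      linarith [hsep' hmn, infDist_nonneg.trans_lt (hr n), dist_comm (c n) (c m)])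
    apply_Q := fun m n hmn => tent_eq_zero (by
      linarith [hsep' hmn, hY n, dist_triangle (c m) (Y n) (c n), dist_comm (c m) (Y n),
        dist_comm (Y n) (c n)]) }, hf_sep⟩

end Tents

/-- `dist_le` is exactly what makes `Spike.toFun` `1`-Lipschitz. -/
structure Spike (M : Type*) [MetricSpace M] where
  a : M
  b : M
  a_ne_b : a ≠ b
  dist_le : dist a b ≤ infDist a {a}ᶜ + infDist b {b}ᶜ

namespace Spike

variable {M : Type*} [MetricSpace M] (S : Spike M)

open Classical in
noncomputable def toFun (x : M) : ℝ :=
  if x = S.a then infDist S.a {S.a}ᶜ else if x = S.b then infDist S.a {S.a}ᶜ - dist S.a S.b else 0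

lemma toFun_a : S.toFun S.a = infDist S.a {S.a}ᶜ := if_pos rfl

lemma toFun_b : S.toFun S.b = infDist S.a {S.a}ᶜ - dist S.a S.b := by
  rw [toFun, if_neg S.a_ne_b.symm, if_pos rfl]

lemma toFun_of_ne {x : M} (ha : x ≠ S.a) (hb : x ≠ S.b) : S.toFun x = 0 := by
  rw [toFun, if_neg ha, if_neg hb]

lemma toFun_nonpos {x : M} (hx : x ≠ S.a) : S.toFun x ≤ 0 := by
  by_cases hb : x = S.b
  · rw [hb, toFun_b, sub_nonpos]; exact infDist_le_dist_of_mem S.a_ne_b.symm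
  · rw [S.toFun_of_ne hx hb]

lemma toFun_nonneg {x : M} (hx : x ≠ S.b) : 0 ≤ S.toFun x := by
  by_cases ha : x = S.a
  · rw [ha, toFun_a]; exact infDist_nonneg
  · rw [S.toFun_of_ne ha hx]

lemma lipschitzWith_toFun : LipschitzWith 1 S.toFun := by
  refine LipschitzWith.of_le_add fun x y => ?_
  rcases eq_or_ne x y with rfl | hxy
  · simp
  rcases eq_or_ne x S.a with rfl | hxa
  · rcases eq_or_ne y S.b with rfl | hyb
    · rw [toFun_a, toFun_b]; linarith
    · linarith [S.toFun_nonneg hyb, S.toFun_a, infDist_compl_le_dist hxy.symm]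
  · rcases eq_or_ne y S.b with rfl | hyb
    · linarith [S.toFun_nonpos hxa, S.toFun_b, S.dist_le, infDist_compl_le_dist hxy,
        dist_comm x S.b]
    · linarith [S.toFun_nonpos hxa, S.toFun_nonneg hyb, dist_nonneg (x := x) (y := y)]

lemma support_subset : Function.support S.toFun ⊆ {S.a, S.b} := fun x hx => by
  by_contra h
  simp only [mem_insert_iff, mem_singleton_iff, not_or] at h
  exact hx (S.toFun_of_ne h.1 h.2)

/-- Two spikes can be used side by side: their supports are disjoint and neither charges the
points of the other. -/
def Compatible (S T : Spike M) : Prop :=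
  S.a ≠ T.a ∧ S.a ≠ T.b ∧ S.b ≠ T.a ∧ (S.b = T.b → S.toFun S.b = 0 ∧ T.toFun T.b = 0)

instance : Std.Symm (Compatible (M := M)) :=
  ⟨fun _ _ ⟨h₁, h₂, h₃, h₄⟩ => ⟨h₁.symm, h₃.symm, h₂.symm, fun h => (h₄ h.symm).symm⟩⟩

lemma toFun_eq_zero_of_compatible {S T : Spike M} (h : Compatible S T) :
    T.toFun S.a = 0 ∧ T.toFun S.b = 0 := by
  refine ⟨T.toFun_of_ne h.1 h.2.1, ?_⟩
  by_cases hb : S.b = T.b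
  · rw [hb]; exact (h.2.2.2 hb).2
  · exact T.toFun_of_ne h.2.2.1 hb

end Spike

theorem exists_peakingSeq_of_spikes {M : Type*} [MetricSpace M] (S : ℕ → Spike M)
    (hS : Pairwise fun m n => (S m).Compatible (S n)) : ∃ G : PeakingSeq M, G.FiniteSupports := by
  refine ⟨{
    f := fun n => (S n).toFun
    P := fun n => (S n).a
    Q := fun n => (S n).b
    lipschitzWith := fun n => (S n).lipschitzWith_toFun
    disjoint_support := fun m n hmn => Set.disjoint_left.2 fun x hm hn => by
      rcases (S m).support_subset hm with rfl | rfl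
      · exact hn (Spike.toFun_eq_zero_of_compatible (hS hmn)).1
      · exact hn (Spike.toFun_eq_zero_of_compatible (hS hmn)).2
    P_ne_Q := fun n => (S n).a_ne_b
    sub_eq_dist := fun n => by simp only [Spike.toFun_a, Spike.toFun_b]; ring
    apply_P := fun m n hmn => (Spike.toFun_eq_zero_of_compatible (hS hmn.symm)).1
    apply_Q := fun m n hmn => (Spike.toFun_eq_zero_of_compatible (hS hmn.symm)).2 }, ?_⟩
  exact fun n => ((finite_singleton _).insert _).subset (S n).support_subset

section Selection

variable {M : Type*} [MetricSpace M]

lemma eventually_forall_mul_dist_lt {s : Set M} (hs : s.Finite) (p : M) (c : ℝ) :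
    ∀ᶠ y in 𝓝 p, ∀ x ∈ s, x ≠ p → c * dist y p < dist x p := by
  refine (eventually_all_finite hs).2 fun x _ => ?_
  rcases eq_or_ne x p with rfl | hxp
  · exact Eventually.of_forall fun _ h => absurd rfl h
  have hlim : Tendsto (fun y => c * dist y p) (𝓝 p) (𝓝 0) := by
    simpa using ((continuous_id.dist (continuous_const (y := p))).tendsto p).const_mul c
  exact (hlim.eventually_lt_const (dist_pos.2 hxp)).mono fun _ hy _ => hy

/-- Tents of radius `dist (X n) p / 4` centred at points `X n` tending to `p` geometrically. -/
theorem exists_peakingSeq_of_frequently [Nontrivial M] {p : M}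
    (h : ∃ᶠ x in 𝓝[≠] p, infDist x {x}ᶜ < dist x p / 4) :
    ∃ G : PeakingSeq M, G.SeparatedSupports := by
  obtain ⟨X, hX, hdec⟩ := exists_seq_of_forall_finset_exists
    (fun x => x ≠ p ∧ infDist x {x}ᶜ < dist x p / 4) (fun x y => 4 * dist y p ≤ dist x p)
    fun s hs => by
      obtain ⟨y, ⟨hy, hys⟩, hyp⟩ := ((h.and_eventually ((eventually_forall_mul_dist_lt
        s.finite_toSet p 4).filter_mono nhdsWithin_le_nhds)).and_eventually
        self_mem_nhdsWithin).exists
      exact ⟨y, ⟨hyp, hy⟩, fun x hx => (hys x hx (hs x hx).1).le⟩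
  exact exists_peakingSeq_of_tents X (fun n => dist (X n) p / 4) (fun n => (hX n).2)
    fun m n hmn => by
      linarith [hdec m n hmn, dist_triangle (X m) (X n) p, dist_nonneg (x := X n) (y := p)]

/-- `S` lives at scale `dist S.a p` around `p`; several such spikes may share the second point `p`,
where they vanish. -/
def Spike.IsNear (p : M) (S : Spike M) : Prop :=
  S.a ≠ p ∧ dist S.a S.b ≤ dist S.a p ∧ (S.b = p → S.toFun S.b = 0)

lemma Spike.IsNear.compatible {p : M} {S T : Spike M} (hS : S.IsNear p) (hT : T.IsNear p)
    (hfar : ∀ q ∈ ({S.a, S.b} : Set M), q ≠ p → 2 * dist T.a p < dist q p) :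
    S.Compatible T := by
  obtain ⟨hSa, -, hSb⟩ := hS
  obtain ⟨hTa, hTab, hTb⟩ := hT
  have hfa := hfar S.a (by simp) hSa
  have hfb := hfar S.b (by simp)
  have hTbp : dist T.b p ≤ 2 * dist T.a p := by
    linarith [dist_triangle T.b T.a p, dist_comm T.a T.b]
  have hTap : 0 < dist T.a p := dist_pos.2 hTa
  refine ⟨fun h => ?_, fun h => ?_, fun h => ?_, fun h => ?_⟩
  · rw [h] at hfa; linarith
  · rw [h] at hfa; linarith
  · rcases eq_or_ne S.b p with hp | hp
    · exact hTa (h ▸ hp)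
    · have := hfb hp; rw [h] at this; linarith
  · rcases eq_or_ne S.b p with hp | hp
    · exact ⟨hSb hp, hTb (h ▸ hp)⟩
    · have := hfb hp; rw [h] at this; linarith

/-- The second point is either `p` itself (when `p` is a nearest neighbour of `x`) or a
near-nearest neighbour `u` of `x`, which is isolated enough because it is far from `p`. -/
lemma exists_spike_isNear {p x : M} (hx : x ≠ p)
    (hnear : ∀ y, y ≠ p → dist y p < 2 * dist x p → dist y p / 4 ≤ infDist y {y}ᶜ) :
    ∃ S : Spike M, S.a = x ∧ S.IsNear p := by
  have := (⟨⟨x, p, hx⟩⟩ : Nontrivial M)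
  have hxp : 0 < dist x p := dist_pos.2 hx
  have hR : infDist x {x}ᶜ ≤ dist x p := infDist_compl_le_dist hx.symm
  have hR' : dist x p / 4 ≤ infDist x {x}ᶜ := hnear x hx (by linarith)
  rcases hR.eq_or_lt with hRp | hRp
  · refine ⟨⟨x, p, hx, by linarith [infDist_nonneg (x := p) (s := {p}ᶜ)]⟩, rfl, hx, le_rfl,
      fun _ => ?_⟩
    rw [Spike.toFun_b]
    exact sub_eq_zero.2 hRp
  set θ := (dist x p - infDist x {x}ᶜ) / 5 with hθ
  obtain ⟨u, hux, hxu⟩ := exists_ne_dist_lt (x := x) (r := infDist x {x}ᶜ + θ) (by linarith)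
  have hup : u ≠ p := by rintro rfl; linarith
  have hu := hnear u hup (by linarith [dist_triangle u x p, dist_comm u x])
  have hθu : θ < infDist u {u}ᶜ := by linarith [dist_triangle x u p]
  exact ⟨⟨x, u, hux.symm, by linarith⟩, rfl, hx, by linarith, fun h => absurd h hup⟩

/-- Spikes at points ever closer to `p`, each at a much smaller scale than the previous ones. -/
theorem exists_peakingSeq_of_eventually {p : M} [(𝓝[≠] p).NeBot]
    (h : ∀ᶠ x in 𝓝[≠] p, dist x p / 4 ≤ infDist x {x}ᶜ) :
    ∃ G : PeakingSeq M, G.FiniteSupports := by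
  obtain ⟨ε, hε, hnear⟩ := nhdsWithin_basis_ball.eventually_iff.1 h
  obtain ⟨S, -, hS⟩ := exists_seq_of_forall_finset_exists' (Spike.IsNear p) Spike.Compatible
    fun s hs => by
      have hpts : (⋃ S ∈ s, ({S.a, S.b} : Set M)).Finite :=
        s.finite_toSet.biUnion fun _ _ => toFinite _
      have hclose : ∀ᶠ x in 𝓝[≠] p, (∀ q ∈ ⋃ S ∈ s, ({S.a, S.b} : Set M), q ≠ p →
          2 * dist x p < dist q p) ∧ x ∈ ball p (ε / 2) :=
        ((eventually_forall_mul_dist_lt hpts p 2).and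
          (ball_mem_nhds p (half_pos hε))).filter_mono nhdsWithin_le_nhds
      obtain ⟨x, ⟨hfar, hxε⟩, hxp⟩ := (hclose.and self_mem_nhdsWithin).exists
      obtain ⟨T, rfl, hT⟩ := exists_spike_isNear hxp fun y hy hyx =>
        hnear ⟨by rw [mem_ball] at hxε ⊢; linarith, hy⟩
      exact ⟨T, hT, fun S hSs => (hs S hSs).compatible hT fun q hq =>
        hfar q (mem_biUnion hSs hq)⟩
  exact exists_peakingSeq_of_spikes S hS

end Selection

section Isolated

variable {M : Type*} [MetricSpace M]

lemma not_totallyBounded_of_infinite [CompleteSpace M] (hiso : ∀ x : M, 0 < infDist x {x}ᶜ)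
    {S : Set M} (hS : S.Infinite) : ¬TotallyBounded S := fun hS' => by
  obtain ⟨q, -, hq⟩ := hS.exists_accPt_of_subset_isCompact
    (hS'.closure.isCompact_of_isClosed isClosed_closure) subset_closure
  obtain ⟨y, ⟨hyq, -⟩, hy⟩ := accPt_iff_nhds.1 hq _ (ball_mem_nhds q (hiso q))
  exact (mem_ball'.1 hyq).not_ge (infDist_compl_le_dist hy)

/-- Points `u n` with `infDist (u n) {u n}ᶜ < 1 / (n + 1)` form an infinite set which, by
completeness, is not totally bounded: this provides infinitely many `δ`-separated points, all but
finitely many of which have a neighbour within `δ / 4`. -/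
theorem exists_peakingSeq_of_isolated_of_small [CompleteSpace M] [Nontrivial M]
    (hiso : ∀ x : M, 0 < infDist x {x}ᶜ) (hsmall : ∀ ρ > 0, ∃ x : M, infDist x {x}ᶜ < ρ) :
    ∃ G : PeakingSeq M, G.SeparatedSupports := by
  choose u hu using fun n : ℕ => hsmall (1 / (n + 1)) Nat.one_div_pos_of_nat
  have hinf : (range u).Infinite := by
    intro hfin
    obtain ⟨_, ⟨n₀, rfl⟩, hmin⟩ :=
      exists_min_image _ (fun x => infDist x {x}ᶜ) hfin (range_nonempty u)
    obtain ⟨n, hn⟩ := exists_nat_one_div_lt (hiso (u n₀))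
    exact (hmin _ (mem_range_self n)).not_gt ((hu n).trans hn)
  obtain ⟨δ, hδ, hδu⟩ : ∃ δ > 0, ∀ t : Set M, t.Finite → ¬ range u ⊆ ⋃ y ∈ t, ball y δ := by
    simpa [Metric.totallyBounded_iff] using not_totallyBounded_of_infinite hiso hinf
  obtain ⟨N, hN⟩ := exists_nat_one_div_lt (show 0 < δ / 4 by positivity)
  have hbig : {x ∈ range u | δ / 4 ≤ infDist x {x}ᶜ}.Finite := by
    refine ((finite_lt_nat N).image u).subset ?_
    rintro _ ⟨⟨n, rfl⟩, hn⟩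
    refine ⟨n, show n < N from not_le.1 fun hNn => ?_, rfl⟩
    linarith [hu n, Nat.one_div_le_one_div (α := ℝ) hNn]
  obtain ⟨X, hX, hsep⟩ := exists_seq_of_forall_finset_exists
    (fun x => infDist x {x}ᶜ < δ / 4) (fun x y => δ ≤ dist x y) fun s _ => by
      obtain ⟨y, hyu, hy⟩ := not_subset.1 (hδu _ (s.finite_toSet.union hbig))
      simp only [mem_iUnion, mem_ball, not_exists, not_lt] at hy
      refine ⟨y, not_le.1 fun hy' => ?_, fun x hx => ?_⟩
      · have := hy y (Or.inr ⟨hyu, hy'⟩)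
        rw [dist_self] at this
        linarith
      · rw [dist_comm]
        exact hy x (Or.inl hx)
  exact exists_peakingSeq_of_tents X (fun _ => δ / 2) (fun n => (hX n).trans (by linarith))
    fun m n hmn => by linarith [hsep m n hmn]

lemma exists_dist_eq_infDist_compl [Nontrivial M] {x : M} {ε : ℝ} (hε : 0 < ε)
    (hfin : {u | u ≠ x ∧ dist x u < infDist x {x}ᶜ + ε}.Finite) :
    ∃ w, w ≠ x ∧ dist x w = infDist x {x}ᶜ := by
  obtain ⟨u, hu⟩ := exists_ne_dist_lt (show infDist x {x}ᶜ < infDist x {x}ᶜ + ε by linarith)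
  obtain ⟨w, hw, hmin⟩ := exists_min_image _ (dist x) hfin ⟨u, hu⟩
  refine ⟨w, hw.1, le_antisymm ?_ (infDist_compl_le_dist hw.1)⟩
  refine (le_infDist (nonempty_compl_of_nontrivial x)).2 fun v hv => ?_
  by_cases hvw : dist x v < infDist x {x}ᶜ + ε
  · exact hmin v ⟨hv, hvw⟩
  · linarith [hw.2]

theorem exists_peakingSeq_of_infinite_nearest {w : M}
    (hw : {x | x ≠ w ∧ dist x w = infDist x {x}ᶜ}.Infinite) :
    ∃ G : PeakingSeq M, G.FiniteSupports := by
  let e := hw.natEmbedding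
  have he n : (e n : M) ≠ w ∧ dist (e n : M) w = infDist (e n : M) {(e n : M)}ᶜ := (e n).2
  refine exists_peakingSeq_of_spikes (fun n => ⟨e n, w, (he n).1,
    by linarith [(he n).2, infDist_nonneg (x := w) (s := {w}ᶜ)]⟩) fun m n hmn => ?_
  refine ⟨fun h => hmn (e.injective (Subtype.ext h)), (he m).1, (he n).1.symm, fun _ => ?_⟩
  exact ⟨(Spike.toFun_b _).trans (sub_eq_zero.2 (he m).2.symm),
    (Spike.toFun_b _).trans (sub_eq_zero.2 (he n).2.symm)⟩

/-- Otherwise every `x ∉ F` would have a nearest neighbour in `F`, so some point of `F` would be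
the nearest neighbour of infinitely many points. -/
lemma exists_near_pair_not_mem [Infinite M] {ρ : ℝ} (hρ : 0 < ρ)
    (hnearest : ∀ w : M, {x | x ≠ w ∧ dist x w = infDist x {x}ᶜ}.Finite) {F : Set M}
    (hF : F.Finite) : ∃ x u, x ∉ F ∧ u ∉ F ∧ u ≠ x ∧ dist x u < infDist x {x}ᶜ + ρ := by
  by_contra hno
  push Not at hno
  have hF' : ∀ x ∉ F, ∃ w ∈ F, x ≠ w ∧ dist x w = infDist x {x}ᶜ := by
    intro x hx
    obtain ⟨w, hwx, hw⟩ := exists_dist_eq_infDist_compl hρ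
      (hF.subset fun u hu => by_contra fun huF => (hno x u hx huF hu.1).not_gt hu.2)
    exact ⟨w, by_contra fun hwF => (hno x w hx hwF hwx).not_gt (by linarith), hwx.symm, hw⟩
  refine infinite_univ ((hF.union (hF.biUnion fun w _ => hnearest w)).subset fun x _ => ?_)
  by_cases hx : x ∈ F
  · exact Or.inl hx
  · obtain ⟨w, hwF, hxw, hd⟩ := hF' x hx
    exact Or.inr (mem_biUnion hwF ⟨hxw, hd⟩)

theorem exists_peakingSeq_of_uniformlyDiscrete [Infinite M] {ρ : ℝ} (hρ : 0 < ρ)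
    (h : ∀ x : M, ρ ≤ infDist x {x}ᶜ) : ∃ G : PeakingSeq M, G.FiniteSupports := by
  by_cases hhub : ∃ w : M, {x | x ≠ w ∧ dist x w = infDist x {x}ᶜ}.Infinite
  · obtain ⟨w, hw⟩ := hhub
    exact exists_peakingSeq_of_infinite_nearest hw
  push Not at hhub
  obtain ⟨S, -, hS⟩ := exists_seq_of_forall_finset_exists' (fun _ : Spike M => True)
    Spike.Compatible fun s _ => by
      obtain ⟨x, u, hx, hu, hux, hxu⟩ := exists_near_pair_not_mem hρ hhub
        (s.finite_toSet.biUnion fun S _ => toFinite ({S.a, S.b} : Set M))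
      refine ⟨⟨x, u, hux.symm, by linarith [h u]⟩, trivial, fun S hS => ?_⟩
      simp only [mem_iUnion, mem_insert_iff, mem_singleton_iff, not_exists, not_or] at hx hu
      exact ⟨fun h => (hx S hS).1 h.symm, fun h => (hu S hS).1 h.symm,
        fun h => (hx S hS).2 h.symm, fun h => absurd h.symm (hu S hS).2⟩
  exact exists_peakingSeq_of_spikes S hS

end Isolated

theorem exists_peakingSeq {M : Type*} [MetricSpace M] [CompleteSpace M] [Infinite M] :
    ∃ G : PeakingSeq M, G.SeparatedSupports ∨ G.FiniteSupports := by
  by_cases hiso : ∀ x : M, 0 < infDist x {x}ᶜ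
  · by_cases hsmall : ∀ ρ > 0, ∃ x : M, infDist x {x}ᶜ < ρ
    · exact (exists_peakingSeq_of_isolated_of_small hiso hsmall).imp fun _ => Or.inl
    push Not at hsmall
    obtain ⟨ρ, hρ, hρx⟩ := hsmall
    exact (exists_peakingSeq_of_uniformlyDiscrete hρ hρx).imp fun _ => Or.inr
  push Not at hiso
  obtain ⟨p, hp⟩ := hiso
  have : (𝓝[≠] p).NeBot := mem_closure_iff_nhdsWithin_neBot.1
    ((mem_closure_iff_infDist_zero (nonempty_compl_of_nontrivial p)).2 (hp.antisymm infDist_nonneg))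
  by_cases h : ∃ᶠ x in 𝓝[≠] p, infDist x {x}ᶜ < dist x p / 4
  · exact (exists_peakingSeq_of_frequently h).imp fun _ => Or.inl
  · exact (exists_peakingSeq_of_eventually ((not_frequently.1 h).mono fun _ => not_lt.1)).imp
      fun _ => Or.inr

/-- Main Theorem: for every infinite complete pointed metric space `M`,
`SNA(M)` contains an isomorphic copy of `c₀`: there is a linear map `T : c₀ → Lip_0(M)`
which is an isomorphism onto its range (the Lipschitz norms of `T v` are equivalent to
`‖v‖`) and every `T v` strongly attains its Lipschitz norm. -/
theorem stmt13 {M : Type*} [MetricSpace M] [CompleteSpace M] [Infinite M] (z : M) :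
    ∃ (T : C₀(ℕ, ℝ) →ₗ[ℝ] (M → ℝ)) (c C : ℝ), 0 < c ∧ 0 < C ∧
      ∀ v : C₀(ℕ, ℝ),
        T v z = 0 ∧
        IsLipWith (C * ‖v‖) (T v) ∧
        c * ‖v‖ ≤ lipNorm (T v) ∧ lipNorm (T v) ≤ C * ‖v‖ ∧
        StronglyAttains (T v) := by
  obtain ⟨G, hG⟩ := exists_peakingSeq (M := M)
  refine ⟨G.toLinearMap z, 1, 2, one_pos, two_pos, fun v => ⟨G.toLinearMap_apply_self z v,
    G.isLipWith_toLinearMap z v, ?_, lipNorm_le (G.isLipWith_toLinearMap z v), ?_⟩⟩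
  · rw [one_mul]
    exact G.norm_le_lipNorm_toLinearMap z v
  · exact G.stronglyAttains_toLinearMap z v hG
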